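/- Let (V,d) be a metric space, k ≥ 1 an integer, α, β ≥ 1 reals, ε ∈ (0,1/2), X a weighted set in V, and let C* be an (α,β)-approximate solution for (k,1)-clustering (k-Median) on X. Suppose (f_x)_{x∈X} satisfies d(x,c) ≤ f_x(c) ≤ (1+ε)·d(x,c) + ε·d(x,C*) for all x ∈ X, c ∈ V, and write F(C) := Σ_{x∈X} w_X(x)·min_{c∈C} f_x(c). Let D be a weighted set with D ⊆ X and weights w_D such that: (a) for every nonempty C ⊆ V with |C| ≤ k, (1−ε)·F(C) ≤ Σ_{x∈D} w_D(x)·min_{c∈C} f_x(c) ≤ (1+ε)·F(C); and (b) Σ_{x∈D} w_D(x)·d(x,C*) ≤ 2·cost(X,C*). Then for every nonempty C ⊆ V with |C| ≤ k, (1 − 10·β·ε)·cost(X,C) ≤ cost(D,C) ≤ (1 + 10·β·ε)·cost(X,C). -/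

import Mathlib

open Finset

/-- A weighted set in `V`: a finite set of points together with positive weights. -/
structure WSet (V : Type*) where
  pts : Finset V
  w : V → ℝ
  pos : ∀ x ∈ pts, 0 < w x

/-- The k-Median cost `cost(X, C) = Σ_{x ∈ X} w_X(x) · d(x, C)`. -/
noncomputable def cost1 {V : Type*} [MetricSpace V] (X : WSet V) (C : Finset V) : ℝ :=
  ∑ x ∈ X.pts, X.w x * Metric.infDist x (C : Set V)

/-- `Cs` is an `(α,β)`-approximate solution for `(k,1)`-clustering (k-Median) on `X`. -/
def IsApprox1 {V : Type*} [MetricSpace V] (k : ℕ) (α β : ℝ) (X : WSet V)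
    (Cs : Finset V) : Prop :=
  Cs.Nonempty ∧ (Cs.card : ℝ) ≤ α * k ∧
  ∀ C : Finset V, C.Nonempty → C.card ≤ k → cost1 X Cs ≤ β * cost1 X C

/-!
Write `F_Y(C) = Σ_{x ∈ Y} w_Y(x) · min_{c ∈ C} f_x(c)`. The pointwise bounds on `f` give
`cost(Y, C) ≤ F_Y(C) ≤ (1 + ε) cost(Y, C) + ε cost(Y, C*)` for `Y = X` and `Y = D`, and
`cost(X, C*) ≤ β cost(X, C)`, while `cost(D, C*) ≤ 2 cost(X, C*)` by (b). Chaining these with (a)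
sandwiches `cost(D, C)` between `(1 - ε - 2βε)/(1 + ε)` and `(1 + ε)(1 + ε + βε)` times
`cost(X, C)`, and both factors are within `10βε` of `1` once `β ≥ 1` and `ε < 1/2`.
-/

open Metric

section Pointwise

variable {V : Type*} [MetricSpace V]

lemma infDist_le_inf' {x : V} {C : Finset V} (hC : C.Nonempty) {g : V → ℝ}
    (hg : ∀ c ∈ C, dist x c ≤ g c) : infDist x (C : Set V) ≤ C.inf' hC g := by
  obtain ⟨c, hc, hgc⟩ := C.exists_mem_eq_inf' hC g
  rw [hgc]
  exact (infDist_le_dist_of_mem hc).trans (hg c hc)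

lemma inf'_le_mul_infDist_add {x : V} {C : Finset V} (hC : C.Nonempty) {g : V → ℝ} {a b : ℝ}
    (hg : ∀ c ∈ C, g c ≤ a * dist x c + b) : C.inf' hC g ≤ a * infDist x (C : Set V) + b := by
  obtain ⟨c, hc, hdist⟩ :=
    C.finite_toSet.isCompact.exists_infDist_eq_dist (by exact_mod_cast hC) x
  rw [hdist]
  exact (C.inf'_le g hc).trans (hg c hc)

end Pointwise

namespace WSet

variable {V : Type*} (Y : WSet V)

lemma sum_mul_le_sum_mul {u v : V → ℝ} (huv : ∀ x ∈ Y.pts, u x ≤ v x) :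
    ∑ x ∈ Y.pts, Y.w x * u x ≤ ∑ x ∈ Y.pts, Y.w x * v x :=
  sum_le_sum fun x hx => mul_le_mul_of_nonneg_left (huv x hx) (Y.pos x hx).le

variable [MetricSpace V]

lemma cost1_nonneg (C : Finset V) : 0 ≤ cost1 Y C :=
  sum_nonneg fun x hx => mul_nonneg (Y.pos x hx).le infDist_nonneg

lemma cost1_le_sum_inf' {C : Finset V} (hC : C.Nonempty) {f : V → V → ℝ}
    (hf : ∀ x ∈ Y.pts, ∀ c ∈ C, dist x c ≤ f x c) :
    cost1 Y C ≤ ∑ x ∈ Y.pts, Y.w x * C.inf' hC (f x) :=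
  Y.sum_mul_le_sum_mul fun x hx => infDist_le_inf' hC (hf x hx)

lemma sum_inf'_le_cost1 {C : Finset V} (hC : C.Nonempty) (Cs : Finset V) {f : V → V → ℝ}
    {ε : ℝ} (hf : ∀ x ∈ Y.pts, ∀ c ∈ C,
      f x c ≤ (1 + ε) * dist x c + ε * infDist x (Cs : Set V)) :
    ∑ x ∈ Y.pts, Y.w x * C.inf' hC (f x) ≤ (1 + ε) * cost1 Y C + ε * cost1 Y Cs := by
  calc ∑ x ∈ Y.pts, Y.w x * C.inf' hC (f x)
      ≤ ∑ x ∈ Y.pts, Y.w x * ((1 + ε) * infDist x (C : Set V) + ε * infDist x (Cs : Set V)) :=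
        Y.sum_mul_le_sum_mul fun x hx => inf'_le_mul_infDist_add hC (hf x hx)
    _ = (1 + ε) * cost1 Y C + ε * cost1 Y Cs := by
        simp only [cost1, mul_sum, ← sum_add_distrib]
        exact sum_congr rfl fun x _ => by ring

end WSet

theorem stmt8_general {V : Type*} [MetricSpace V] (k : ℕ)
    (α β ε : ℝ) (hβ : 1 ≤ β) (hε0 : 0 < ε) (hε1 : ε < 1/2)
    (X : WSet V) (Cs : Finset V) (happrox : IsApprox1 k α β X Cs)
    (f : V → V → ℝ)
    (hf : ∀ x ∈ X.pts, ∀ c : V,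
      dist x c ≤ f x c ∧ f x c ≤ (1 + ε) * dist x c + ε * Metric.infDist x (Cs : Set V))
    (D : WSet V) (hDX : D.pts ⊆ X.pts)
    (ha : ∀ (C : Finset V) (hC : C.Nonempty), C.card ≤ k →
      (1 - ε) * (∑ x ∈ X.pts, X.w x * C.inf' hC (f x)) ≤
        (∑ x ∈ D.pts, D.w x * C.inf' hC (f x)) ∧
      (∑ x ∈ D.pts, D.w x * C.inf' hC (f x)) ≤
        (1 + ε) * (∑ x ∈ X.pts, X.w x * C.inf' hC (f x)))
    (hb : (∑ x ∈ D.pts, D.w x * Metric.infDist x (Cs : Set V)) ≤ 2 * cost1 X Cs) :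
    ∀ C : Finset V, C.Nonempty → C.card ≤ k →
      (1 - 10 * β * ε) * cost1 X C ≤ cost1 D C ∧
      cost1 D C ≤ (1 + 10 * β * ε) * cost1 X C := by
  intro C hC hCk
  obtain ⟨hFX_FD, hFD_FX⟩ := ha C hC hCk
  have hCs : cost1 X Cs ≤ β * cost1 X C := happrox.2.2 C hC hCk
  have hX := X.cost1_nonneg C
  have hXF := X.cost1_le_sum_inf' hC fun x hx c _ => (hf x hx c).1
  have hFX := X.sum_inf'_le_cost1 hC Cs fun x hx c _ => (hf x hx c).2
  have hDF := D.cost1_le_sum_inf' hC fun x hx c _ => (hf x (hDX hx) c).1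
  have hFD := D.sum_inf'_le_cost1 hC Cs fun x hx c _ => (hf x (hDX hx) c).2
  have hDCs : cost1 D Cs ≤ 2 * (β * cost1 X C) := hb.trans (by gcongr)
  have hlower : (1 - ε) * cost1 X C ≤ (1 + ε) * cost1 D C + ε * (2 * (β * cost1 X C)) :=
    calc (1 - ε) * cost1 X C
        ≤ (1 - ε) * ∑ x ∈ X.pts, X.w x * C.inf' hC (f x) := by gcongr; linarith
      _ ≤ (1 + ε) * cost1 D C + ε * cost1 D Cs := hFX_FD.trans hFD
      _ ≤ (1 + ε) * cost1 D C + ε * (2 * (β * cost1 X C)) := by gcongr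
  have hupper : cost1 D C ≤ (1 + ε) * ((1 + ε) * cost1 X C + ε * (β * cost1 X C)) :=
    calc cost1 D C
        ≤ (1 + ε) * ∑ x ∈ X.pts, X.w x * C.inf' hC (f x) := hDF.trans hFD_FX
      _ ≤ (1 + ε) * ((1 + ε) * cost1 X C + ε * (β * cost1 X C)) := by
        gcongr; exact hFX.trans (by gcongr)
  constructor
  · have hgap : 0 ≤ cost1 X C * ε * (8 * β - 2 + 10 * β * ε) :=
      mul_nonneg (by positivity) (by nlinarith)
    refine le_of_mul_le_mul_left (a := 1 + ε) ?_ (by linarith)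
    linarith
  · have hgap : 0 ≤ cost1 X C * ε * (9 * β - 2 - ε - ε * β) :=
      mul_nonneg (by positivity) (by nlinarith)
    linarith

theorem stmt8 {V : Type*} [MetricSpace V] (k : ℕ) (hk : 1 ≤ k)
    (α β ε : ℝ) (hα : 1 ≤ α) (hβ : 1 ≤ β) (hε0 : 0 < ε) (hε1 : ε < 1/2)
    (X : WSet V) (Cs : Finset V) (happrox : IsApprox1 k α β X Cs)
    (f : V → V → ℝ)
    (hf : ∀ x ∈ X.pts, ∀ c : V,
      dist x c ≤ f x c ∧ f x c ≤ (1 + ε) * dist x c + ε * Metric.infDist x (Cs : Set V))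
    (D : WSet V) (hDX : D.pts ⊆ X.pts)
    (ha : ∀ (C : Finset V) (hC : C.Nonempty), C.card ≤ k →
      (1 - ε) * (∑ x ∈ X.pts, X.w x * C.inf' hC (f x)) ≤
        (∑ x ∈ D.pts, D.w x * C.inf' hC (f x)) ∧
      (∑ x ∈ D.pts, D.w x * C.inf' hC (f x)) ≤
        (1 + ε) * (∑ x ∈ X.pts, X.w x * C.inf' hC (f x)))
    (hb : (∑ x ∈ D.pts, D.w x * Metric.infDist x (Cs : Set V)) ≤ 2 * cost1 X Cs) :
    ∀ C : Finset V, C.Nonempty → C.card ≤ k →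
      (1 - 10 * β * ε) * cost1 X C ≤ cost1 D C ∧
      cost1 D C ≤ (1 + 10 * β * ε) * cost1 X C :=
  stmt8_general k α β ε hβ hε0 hε1 X Cs happrox f hf D hDX ha hb
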